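/- arXiv:1608.05489 — 7 statements merged into one kernel-verified Lean document; each statement's English description precedes it below -/
import Mathlib

section
/- If (x_α) is an increasing net in a normed lattice X and x_α un-converges to x (i.e., |x_α − x| ∧ u converges to 0 in norm for every u ∈ X₊), then x_α ↑ x and x_α converges to x in norm. -/
open Filter Topology

/-- The filter of un-neighborhoods of zero in a normed lattice,
generated by the sets `V_{ε,u} = {x : ‖|x| ⊓ u‖ < ε}`. -/
def unNhdsZero (X : Type*) [NormedAddCommGroup X] [Lattice X] [HasSolidNorm X] [IsOrderedAddMonoid X] : Filter X :=
  ⨅ (ε : ℝ) (_ : 0 < ε) (u : X) (_ : 0 ≤ u) (_ : u ≠ 0),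
    Filter.principal {x : X | ‖|x| ⊓ u‖ < ε}

/-- The un-topology on a normed lattice. -/
def unTopology (X : Type*) [NormedAddCommGroup X] [Lattice X] [HasSolidNorm X] [IsOrderedAddMonoid X] : TopologicalSpace X :=
  TopologicalSpace.mkOfNhds fun x => Filter.map (fun y => x + y) (unNhdsZero X)

/-- A net `f` un-converges to `x` if `‖|f i - x| ⊓ u‖ → 0` for every `u ≥ 0`. -/
def UnTendsto {ι X : Type*} [NormedAddCommGroup X] [Lattice X] [HasSolidNorm X] [IsOrderedAddMonoid X]
    (f : ι → X) (l : Filter ι) (x : X) : Prop :=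
  ∀ u : X, 0 ≤ u → Tendsto (fun i => ‖|f i - x| ⊓ u‖) l (𝓝 0)

/-!
Every `f i` is an eventual lower bound of the net, and un-limits keep eventual lower bounds, so
`f i ≤ x`. Hence `|f j - x| = x - f j ≤ x - f i₀` for `j ≥ i₀`, and testing un-convergence against
the single vector `u = x - f i₀` is already norm convergence. An increasing net converging in an
order-closed topology converges to its supremum.
-/

namespace UnTendsto

variable {ι X : Type*} [NormedAddCommGroup X] [Lattice X] [HasSolidNorm X] [IsOrderedAddMonoid X]
  {f : ι → X} {l : Filter ι} {x : X}

-- Against `u = (a - x)⁺` the tested quantity is eventually the constant `‖u‖`.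
theorem le_of_eventually_le [l.NeBot] (h : UnTendsto f l x) {a : X} (ha : ∀ᶠ i in l, a ≤ f i) :
    a ≤ x := by
  have hconst : ∀ᶠ i in l, ‖|f i - x| ⊓ (a - x)⁺‖ = ‖(a - x)⁺‖ := by
    filter_upwards [ha] with i hi
    have hpos : (a - x)⁺ ≤ |f i - x| :=
      (posPart_mono (sub_le_sub_right hi x)).trans (sup_le (le_abs_self _) (abs_nonneg _))
    rw [inf_eq_right.mpr hpos]
  have hzero : ‖(a - x)⁺‖ = 0 :=
    tendsto_nhds_unique tendsto_const_nhds ((h _ (posPart_nonneg _)).congr' hconst)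
  exact sub_nonpos.mp (posPart_eq_zero.mp (norm_eq_zero.mp hzero))

theorem tendsto_of_eventually_abs_sub_le (h : UnTendsto f l x) {u : X}
    (hu : ∀ᶠ i in l, |f i - x| ≤ u) : Tendsto f l (𝓝 x) := by
  refine tendsto_iff_norm_sub_tendsto_zero.mpr ((h |u| (abs_nonneg u)).congr' ?_)
  filter_upwards [hu] with i hi
  rw [inf_eq_left.mpr (hi.trans (le_abs_self u)), norm_abs_eq_norm]

end UnTendsto

/-- If an increasing net un-converges to `x`, then `x` is its supremum and it
converges to `x` in norm. -/
theorem increasing_unTendsto_isLUB_and_norm_tendsto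
    {ι X : Type*} [SemilatticeSup ι] [Nonempty ι] [NormedAddCommGroup X] [Lattice X] [HasSolidNorm X] [IsOrderedAddMonoid X]
    (f : ι → X) (x : X) (hmono : Monotone f)
    (h : UnTendsto f Filter.atTop x) :
    IsLUB (Set.range f) x ∧ Tendsto f Filter.atTop (𝓝 x) := by
  have hle : ∀ i, f i ≤ x := fun i =>
    h.le_of_eventually_le ((eventually_ge_atTop i).mono fun _ hj => hmono hj)
  obtain ⟨i₀⟩ : Nonempty ι := inferInstance
  have htendsto : Tendsto f atTop (𝓝 x) := by
    refine h.tendsto_of_eventually_abs_sub_le (u := x - f i₀) ?_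
    filter_upwards [eventually_ge_atTop i₀] with j hj
    rw [abs_sub_comm, abs_of_nonneg (sub_nonneg.mpr (hle j))]
    exact sub_le_sub_left (hmono hj) x
  exact ⟨isLUB_of_tendsto_atTop hmono htendsto, htendsto⟩
end

section
/- Let X be a Banach lattice, ε > 0 and 0 ≠ u ∈ X₊, and let V_{ε,u} = {x ∈ X : ‖|x| ∧ u‖ < ε}. Then either V_{ε,u} ⊆ [−u, u], or V_{ε,u} contains a non-trivial ideal of X. -/
open Filter Topology

/-!
If some `x ∈ V_{ε,u}` lies outside `[-u, u]`, then `y = (|x| - u)⁺ ≠ 0`. Since `y` is disjoint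
from `(|x| - u)⁻ ≥ u - |x|`, so is every multiple `n • y`, and therefore `(n • y) ⊓ u ≤ |x| ⊓ u`.
Hence the ideal `{z : ∃ n, |z| ≤ n • y}` generated by `y` lies in `V_{ε,u}`, by solidity of the norm.
-/

section LatticeOrderedAddCommGroup

variable {α : Type*} [AddCommGroup α] [Lattice α] [IsOrderedAddMonoid α] {a b c : α}

theorem add_inf_le_inf_add_inf (ha : 0 ≤ a) (hb : 0 ≤ b) (hc : 0 ≤ c) :
    (a + b) ⊓ c ≤ a ⊓ c + b ⊓ c := by
  rw [add_inf, inf_add, inf_add]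
  refine le_inf (le_inf inf_le_left ?_) (le_inf ?_ ?_) <;> refine inf_le_right.trans ?_
  · exact le_add_of_nonneg_right hb
  · exact le_add_of_nonneg_left ha
  · exact le_add_of_nonneg_right hc

theorem le_of_le_add_of_inf_eq_zero (ha : 0 ≤ a) (hb : 0 ≤ b) (hc : 0 ≤ c) (hcab : c ≤ a + b)
    (hcb : c ⊓ b = 0) : c ≤ a :=
  calc c = (a + b) ⊓ c := (inf_eq_right.mpr hcab).symm
    _ ≤ a ⊓ c + b ⊓ c := add_inf_le_inf_add_inf ha hb hc
    _ = a ⊓ c := by rw [inf_comm b, hcb, add_zero]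
    _ ≤ a := inf_le_left

theorem nsmul_inf_eq_zero (ha : 0 ≤ a) (hb : 0 ≤ b) (hab : a ⊓ b = 0) (n : ℕ) :
    (n • a) ⊓ b = 0 := by
  induction n with
  | zero => simp [hb]
  | succ n ih =>
    refine le_antisymm ?_ (le_inf (nsmul_nonneg ha _) hb)
    calc ((n + 1) • a) ⊓ b ≤ (n • a) ⊓ b + a ⊓ b :=
          succ_nsmul a n ▸ add_inf_le_inf_add_inf (nsmul_nonneg ha n) ha hb
      _ = 0 := by rw [ih, hab, add_zero]

theorem nonneg_of_nsmul_nonneg {n : ℕ} (hn : n ≠ 0) (h : 0 ≤ n • a) : 0 ≤ a := by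
  have hle : a⁻ ≤ 0 + n • a⁺ := by
    rw [zero_add]
    calc a⁻ ≤ n • a⁻ := le_self_nsmul (negPart_nonneg a) hn
      _ ≤ n • a⁺ := by rwa [← sub_nonneg, ← nsmul_sub, posPart_sub_negPart]
  have hdisj : a⁻ ⊓ n • a⁺ = 0 := by
    rw [inf_comm, nsmul_inf_eq_zero (posPart_nonneg a) (negPart_nonneg a)
      (posPart_inf_negPart_eq_zero a)]
  exact negPart_eq_zero.mp <| le_antisymm
    (le_of_le_add_of_inf_eq_zero le_rfl (nsmul_nonneg (posPart_nonneg a) n) (negPart_nonneg a)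
      hle hdisj)
    (negPart_nonneg a)

theorem nsmul_posPart_sub_inf_le (ha : 0 ≤ a) (hb : 0 ≤ b) (n : ℕ) :
    (n • (a - b)⁺) ⊓ b ≤ a ⊓ b := by
  have hdisj : (n • (a - b)⁺) ⊓ (a - b)⁻ = 0 :=
    nsmul_inf_eq_zero (posPart_nonneg _) (negPart_nonneg _) (posPart_inf_negPart_eq_zero _) n
  refine le_inf (le_of_le_add_of_inf_eq_zero ha (negPart_nonneg (a - b))
    (le_inf (nsmul_nonneg (posPart_nonneg _) n) hb) ?_ ?_) inf_le_right
  · calc (n • (a - b)⁺) ⊓ b ≤ b := inf_le_right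
      _ ≤ a + (a - b)⁻ := by simpa [add_comm] using neg_le_negPart (a - b)
  · exact le_antisymm (hdisj ▸ inf_le_inf_right _ inf_le_left)
      (le_inf (le_inf (nsmul_nonneg (posPart_nonneg _) n) hb) (negPart_nonneg _))

end LatticeOrderedAddCommGroup

/-- `0 ≤ t • x` is a closed condition on `t`, and it holds at `t = k / n` because
`n • ((k / n) • x) = k • x ≥ 0` and a lattice-ordered group is unperforated. -/
theorem isOrderedModule_real_of_closedIciTopology {X : Type*} [AddCommGroup X] [Lattice X]
    [IsOrderedAddMonoid X] [Module ℝ X] [TopologicalSpace X] [ClosedIciTopology X]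
    [ContinuousSMul ℝ X] : IsOrderedModule ℝ X := by
  refine IsOrderedModule.of_smul_nonneg fun c hc x hx ↦ ?_
  have hlim : Tendsto (fun n : ℕ ↦ (⌊c * n⌋₊ / n : ℝ)) atTop (𝓝 c) :=
    (tendsto_nat_floor_mul_div_atTop hc).comp tendsto_natCast_atTop_atTop
  have hclosed : IsClosed {t : ℝ | 0 ≤ t • x} :=
    isClosed_Ici.preimage (continuous_id.smul continuous_const)
  refine hclosed.mem_of_tendsto hlim ?_
  filter_upwards [eventually_ne_atTop 0] with n hn
  refine nonneg_of_nsmul_nonneg hn (?_ : 0 ≤ n • ((⌊c * n⌋₊ / n : ℝ) • x))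
  rw [← Nat.cast_smul_eq_nsmul ℝ, smul_smul, mul_div_cancel₀ _ (Nat.cast_ne_zero.mpr hn),
    Nat.cast_smul_eq_nsmul]
  exact nsmul_nonneg hx _

section OrderedModule

variable {𝕜 X : Type*} [Ring 𝕜] [LinearOrder 𝕜] [IsOrderedRing 𝕜] [AddCommGroup X] [Lattice X]
  [Module 𝕜 X]

theorem abs_smul_le [PosSMulMono 𝕜 X] (c : 𝕜) (z : X) : |c • z| ≤ |c| • |z| := by
  have key : ∀ t : 𝕜, t • z ≤ |t| • |z| := by
    intro t
    rcases le_or_gt 0 t with ht | ht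
    · rw [abs_of_nonneg ht]
      exact smul_le_smul_of_nonneg_left (le_abs_self z) ht
    · rw [abs_of_neg ht, ← neg_smul_neg]
      exact smul_le_smul_of_nonneg_left (neg_le_abs z) (neg_nonneg.mpr ht.le)
  exact abs_le'.mpr ⟨key c, by simpa using key (-c)⟩

variable [IsOrderedAddMonoid X]

variable (𝕜) in
def principalSolidSubmodule [Archimedean 𝕜] [IsOrderedModule 𝕜 X] (y : X) : Submodule 𝕜 X where
  carrier := {z | ∃ n : ℕ, |z| ≤ n • |y|}
  zero_mem' := ⟨0, by simp⟩
  add_mem' := by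
    rintro a b ⟨n, ha⟩ ⟨m, hb⟩
    exact ⟨n + m, (abs_add_le a b).trans (add_nsmul |y| n m ▸ add_le_add ha hb)⟩
  smul_mem' := by
    rintro c z ⟨n, hz⟩
    obtain ⟨m, hm⟩ := exists_nat_ge |c|
    refine ⟨m * n, ?_⟩
    calc |c • z| ≤ |c| • |z| := abs_smul_le c z
      _ ≤ |c| • (n • |y|) := smul_le_smul_of_nonneg_left hz (abs_nonneg c)
      _ ≤ (m : 𝕜) • (n • |y|) := smul_le_smul_of_nonneg_right hm (nsmul_nonneg (abs_nonneg y) n)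
      _ = (m * n) • |y| := by rw [Nat.cast_smul_eq_nsmul, mul_nsmul']

variable [Archimedean 𝕜] [IsOrderedModule 𝕜 X] {y z : X}

theorem mem_principalSolidSubmodule : z ∈ principalSolidSubmodule 𝕜 y ↔ ∃ n : ℕ, |z| ≤ n • |y| :=
  Iff.rfl

theorem principalSolidSubmodule_isSolid (hz : z ∈ principalSolidSubmodule 𝕜 y) (w : X)
    (hwz : |w| ≤ |z|) : w ∈ principalSolidSubmodule 𝕜 y :=
  let ⟨n, hn⟩ := hz; ⟨n, hwz.trans hn⟩

theorem principalSolidSubmodule_ne_bot (hy : y ≠ 0) : principalSolidSubmodule 𝕜 y ≠ ⊥ :=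
  (Submodule.ne_bot_iff _).mpr ⟨y, ⟨1, by rw [one_nsmul]⟩, hy⟩

end OrderedModule

theorem HasSolidNorm.norm_le_norm_of_nonneg_of_le {X : Type*} [NormedAddCommGroup X] [Lattice X]
    [HasSolidNorm X] [IsOrderedAddMonoid X] {a b : X} (ha : 0 ≤ a) (hab : a ≤ b) : ‖a‖ ≤ ‖b‖ :=
  HasSolidNorm.solid <| by rwa [abs_of_nonneg ha, abs_of_nonneg (ha.trans hab)]

theorem Vset_subset_interval_or_contains_ideal_general
    {X : Type*} [NormedAddCommGroup X] [Lattice X] [HasSolidNorm X]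
    [IsOrderedAddMonoid X] [NormedSpace ℝ X]
    (ε : ℝ) (u : X) (hu : 0 ≤ u) :
    {x : X | ‖|x| ⊓ u‖ < ε} ⊆ Set.Icc (-u) u ∨
      ∃ I : Submodule ℝ X, I ≠ ⊥ ∧ (∀ x ∈ I, ∀ y : X, |y| ≤ |x| → y ∈ I) ∧
        (I : Set X) ⊆ {x : X | ‖|x| ⊓ u‖ < ε} := by
  have := isOrderedModule_real_of_closedIciTopology (X := X)
  refine or_iff_not_imp_left.mpr fun hV ↦ ?_
  obtain ⟨x, hxV, hxu⟩ := Set.not_subset.mp hV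
  have hy : (|x| - u)⁺ ≠ 0 := by
    rw [Ne, posPart_eq_zero, sub_nonpos]
    exact fun h ↦ hxu ⟨neg_le.mp ((neg_le_abs x).trans h), (le_abs_self x).trans h⟩
  refine ⟨principalSolidSubmodule ℝ (|x| - u)⁺, principalSolidSubmodule_ne_bot hy,
    fun _ ↦ principalSolidSubmodule_isSolid, fun z hz ↦ ?_⟩
  obtain ⟨n, hn⟩ := mem_principalSolidSubmodule.mp hz
  have hle : |z| ⊓ u ≤ |x| ⊓ u := calc
    |z| ⊓ u ≤ (n • (|x| - u)⁺) ⊓ u := by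
      rw [abs_of_nonneg (posPart_nonneg _)] at hn
      exact inf_le_inf_right u hn
    _ ≤ |x| ⊓ u := nsmul_posPart_sub_inf_le (abs_nonneg x) hu n
  exact (HasSolidNorm.norm_le_norm_of_nonneg_of_le (le_inf (abs_nonneg z) hu) hle).trans_lt hxV

/-- Dichotomy: `V_{ε,u} = {x : ‖|x| ⊓ u‖ < ε}` is either contained in the order
interval `[-u, u]`, or it contains a non-trivial (nonzero solid) ideal. -/
theorem Vset_subset_interval_or_contains_ideal
    {X : Type*} [NormedAddCommGroup X] [Lattice X] [HasSolidNorm X]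
    [IsOrderedAddMonoid X] [NormedSpace ℝ X] [CompleteSpace X]
    (ε : ℝ) (hε : 0 < ε) (u : X) (hu : 0 ≤ u) (hu0 : u ≠ 0) :
    {x : X | ‖|x| ⊓ u‖ < ε} ⊆ Set.Icc (-u) u ∨
      ∃ I : Submodule ℝ X, I ≠ ⊥ ∧ (∀ x ∈ I, ∀ y : X, |y| ≤ |x| → y ∈ I) ∧
        (I : Set X) ⊆ {x : X | ‖|x| ⊓ u‖ < ε} :=
  Vset_subset_interval_or_contains_ideal_general ε u hu
end

section
/- Let Y be a norm-dense sublattice of a normed lattice X and (y_α) a net in Y. If y_α un-converges to 0 in Y (i.e., ‖|y_α| ∧ v‖ → 0 for all v ∈ Y₊), then y_α un-converges to 0 in X. -/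
open Filter Topology

section SolidNorm

variable {α : Type*} [NormedAddCommGroup α] [Lattice α] [HasSolidNorm α] [IsOrderedAddMonoid α]

theorem lipschitzWith_norm_inf_left (x : α) : LipschitzWith 1 fun u => ‖x ⊓ u‖ :=
  LipschitzWith.of_dist_le_mul fun u v => by
    rw [NNReal.coe_one, one_mul, dist_eq_norm, dist_eq_norm]
    calc |‖x ⊓ u‖ - ‖x ⊓ v‖| ≤ ‖x ⊓ u - x ⊓ v‖ := abs_norm_sub_norm_le _ _
      _ = ‖u ⊓ x - v ⊓ x‖ := by rw [inf_comm x u, inf_comm x v]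
      _ ≤ ‖u - v‖ := norm_inf_sub_inf_le_norm u v x

theorem isClosed_setOf_tendsto_norm_inf_zero {ι : Type*} (f : ι → α) (l : Filter ι) :
    IsClosed {u | Tendsto (fun i => ‖f i ⊓ u‖) l (𝓝 0)} :=
  (LipschitzWith.uniformEquicontinuous _ 1 fun i => lipschitzWith_norm_inf_left (f i))
    |>.equicontinuous.isClosed_setOfPred_tendsto (f := fun _ => 0) continuous_const

end SolidNorm

theorem unTendsto_of_unTendsto_in_dense_sublattice_general
    {ι X : Type*} [NormedAddCommGroup X] [Lattice X] [HasSolidNorm X]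
    [IsOrderedAddMonoid X] [NormedSpace ℝ X]
    (Y : Submodule ℝ X) (hlat : ∀ y ∈ Y, |y| ∈ Y)
    (hdense : closure (Y : Set X) = Set.univ)
    (l : Filter ι) (y : ι → X)
    (h : ∀ v ∈ Y, 0 ≤ v → Tendsto (fun i => ‖|y i| ⊓ v‖) l (𝓝 0)) :
    UnTendsto y l 0 := by
  intro u hu
  have hu_mem : u ∈ closure ((fun v : X => |v|) '' Y) := by
    rw [← abs_of_nonneg hu]
    exact mem_closure_image (continuous_id.sup continuous_neg).continuousAt
      (hdense ▸ Set.mem_univ u)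
  have habs_subset :
      (fun v : X => |v|) '' Y ⊆ {w | Tendsto (fun i => ‖|y i| ⊓ w‖) l (𝓝 0)} := by
    rintro _ ⟨v, hv, rfl⟩
    exact h |v| (hlat v hv) (abs_nonneg v)
  have hclosed := isClosed_setOf_tendsto_norm_inf_zero (fun i => |y i|) l
  simpa only [sub_zero, Set.mem_ofPred_eq] using hclosed.closure_subset_iff.2 habs_subset hu_mem

/-- If `Y` is a norm-dense sublattice of a normed lattice `X` and a net in `Y`
un-converges to `0` in `Y` (tested against positive elements of `Y`), then it
un-converges to `0` in `X`. -/
theorem unTendsto_of_unTendsto_in_dense_sublattice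
    {ι X : Type*} [NormedAddCommGroup X] [Lattice X] [HasSolidNorm X]
    [IsOrderedAddMonoid X] [NormedSpace ℝ X]
    (Y : Submodule ℝ X) (hlat : ∀ y ∈ Y, |y| ∈ Y)
    (hdense : closure (Y : Set X) = Set.univ)
    (l : Filter ι) (y : ι → X) (hy : ∀ i, y i ∈ Y)
    (h : ∀ v ∈ Y, 0 ≤ v → Tendsto (fun i => ‖|y i| ⊓ v‖) l (𝓝 0)) :
    UnTendsto y l 0 :=
  unTendsto_of_unTendsto_in_dense_sublattice_general Y hlat hdense l y h
end

section
/- Let Y be a majorizing sublattice of a normed lattice X and (y_α) a net in Y un-converging to 0 in Y. Then y_α un-converges to 0 in X. -/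
open Filter Topology

section

variable {ι X : Type*} [NormedAddCommGroup X] [Lattice X] [HasSolidNorm X] [IsOrderedAddMonoid X]

theorem norm_abs_inf_le_norm_abs_inf (a : X) {u v : X} (hu : 0 ≤ u) (huv : u ≤ v) :
    ‖|a| ⊓ u‖ ≤ ‖|a| ⊓ v‖ := by
  apply norm_le_norm_of_abs_le_abs
  rw [abs_of_nonneg (le_inf (abs_nonneg a) hu),
    abs_of_nonneg (le_inf (abs_nonneg a) (hu.trans huv))]
  exact inf_le_inf_left _ huv

theorem unTendsto_of_forall_exists_ge {f : ι → X} {l : Filter ι} {x : X}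
    (h : ∀ u : X, 0 ≤ u → ∃ v, u ≤ v ∧ Tendsto (fun i => ‖|f i - x| ⊓ v‖) l (𝓝 0)) :
    UnTendsto f l x := by
  intro u hu
  obtain ⟨v, huv, hv⟩ := h u hu
  exact squeeze_zero (fun _ => norm_nonneg _)
    (fun i => norm_abs_inf_le_norm_abs_inf (f i - x) hu huv) hv

end

theorem unTendsto_of_unTendsto_in_majorizing_sublattice_general
    {ι X : Type*} [NormedAddCommGroup X] [Lattice X] [HasSolidNorm X]
    [IsOrderedAddMonoid X] [NormedSpace ℝ X]
    (Y : Submodule ℝ X)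
    (hmaj : ∀ x : X, 0 ≤ x → ∃ v ∈ Y, 0 ≤ v ∧ x ≤ v)
    (l : Filter ι) (y : ι → X)
    (h : ∀ v ∈ Y, 0 ≤ v → Tendsto (fun i => ‖|y i| ⊓ v‖) l (𝓝 0)) :
    UnTendsto y l 0 := by
  refine unTendsto_of_forall_exists_ge fun u hu => ?_
  obtain ⟨v, hvY, hv0, huv⟩ := hmaj u hu
  exact ⟨v, huv, by simpa only [sub_zero] using h v hvY hv0⟩

/-- If `Y` is a majorizing sublattice of a normed lattice `X` and a net in `Y`
un-converges to `0` in `Y`, then it un-converges to `0` in `X`. -/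
theorem unTendsto_of_unTendsto_in_majorizing_sublattice
    {ι X : Type*} [NormedAddCommGroup X] [Lattice X] [HasSolidNorm X]
    [IsOrderedAddMonoid X] [NormedSpace ℝ X]
    (Y : Submodule ℝ X) (hlat : ∀ y ∈ Y, |y| ∈ Y)
    (hmaj : ∀ x : X, 0 ≤ x → ∃ v ∈ Y, 0 ≤ v ∧ x ≤ v)
    (l : Filter ι) (y : ι → X) (hy : ∀ i, y i ∈ Y)
    (h : ∀ v ∈ Y, 0 ≤ v → Tendsto (fun i => ‖|y i| ⊓ v‖) l (𝓝 0)) :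
    UnTendsto y l 0 :=
  unTendsto_of_unTendsto_in_majorizing_sublattice_general Y hmaj l y h
end

section
/- Every band in a normed lattice is closed in the un-topology: if (x_α) is a net in a band B and x_α un-converges to x, then x ∈ B. -/
open Filter Topology

/-!
The truncations `|f i| ⊓ |x|` lie in the solid set `B` and satisfy
`0 ≤ |x| - |f i| ⊓ |x| ≤ |f i - x| ⊓ |x|`, so un-convergence of `f` to `x`, tested against
`u = |x|`, makes them converge in norm to `|x|`. Being bounded above by `|x|`, they then have
`|x|` as their supremum, which therefore lies in the band `B`; by solidity so does `x`.
-/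

theorem abs_sub_abs_inf_abs_le {α : Type*} [Lattice α] [AddCommGroup α] [IsOrderedAddMonoid α]
    (x y : α) : |x| - |y| ⊓ |x| ≤ |y - x| ⊓ |x| := by
  refine le_inf ?_ (sub_le_self _ (le_inf (abs_nonneg y) (abs_nonneg x)))
  have h : |x| - |y| ≤ |y - x| :=
    (le_abs_self _).trans ((abs_abs_sub_abs_le x y).trans (abs_sub_comm x y).le)
  calc |x| - |y| ⊓ |x| = (|x| - |y|) ⊔ (|x| - |x|) := sub_inf _ _ _
    _ ≤ |y - x| := sup_le h (by simp)

theorem UnTendsto.tendsto_abs_inf_abs {ι X : Type*} [NormedAddCommGroup X] [Lattice X]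
    [HasSolidNorm X] [IsOrderedAddMonoid X] {f : ι → X} {l : Filter ι} {x : X}
    (h : UnTendsto f l x) : Tendsto (fun i => |f i| ⊓ |x|) l (𝓝 |x|) := by
  rw [tendsto_iff_norm_sub_tendsto_zero]
  refine squeeze_zero (fun _ => norm_nonneg _) (fun i => ?_) (h |x| (abs_nonneg x))
  refine norm_le_norm_of_abs_le_abs ?_
  rw [abs_sub_comm, abs_of_nonneg (sub_nonneg.mpr inf_le_right),
    abs_of_nonneg (le_inf (abs_nonneg _) (abs_nonneg _))]
  exact abs_sub_abs_inf_abs_le x (f i)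

/-- Every band in a normed lattice is un-closed: if a net in a band `B`
un-converges to `x`, then `x ∈ B`. -/
theorem band_unClosed
    {ι X : Type*} [NormedAddCommGroup X] [Lattice X] [HasSolidNorm X] [IsOrderedAddMonoid X] [NormedSpace ℝ X]
    (B : Submodule ℝ X)
    (hsolid : ∀ x : X, ∀ y ∈ B, |x| ≤ |y| → x ∈ B)
    (hband : ∀ s : Set X, s ⊆ (B : Set X) → ∀ x : X, IsLUB s x → x ∈ B)
    (l : Filter ι) [l.NeBot] (f : ι → X) (hf : ∀ i, f i ∈ B) (x : X)
    (h : UnTendsto f l x) : x ∈ B := by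
  have htrunc_mem : ∀ i, |f i| ⊓ |x| ∈ B := fun i =>
    hsolid _ (f i) (hf i) <| by
      rw [abs_of_nonneg (le_inf (abs_nonneg _) (abs_nonneg _))]
      exact inf_le_left
  have hlub : IsLUB (Set.range fun i => |f i| ⊓ |x|) |x| :=
    IsLUB.range_of_tendsto (fun _ => inf_le_right) h.tendsto_abs_inf_abs
  have habs_mem : |x| ∈ B := hband _ (Set.range_subset_iff.mpr htrunc_mem) _ hlub
  exact hsolid x |x| habs_mem (abs_abs x).ge
end

section
/- Let 𝓑 be a family of pairwise disjoint projection bands in a Banach lattice X whose linear span is norm dense in X. Then a net x_α un-converges to x in X if and only if P_B x_α un-converges to P_B x in B for every B ∈ 𝓑. -/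
/-!
An additive map `Q` with `0 ≤ Q ≤ I` is a lattice homomorphism, and for `0 ≤ v` in its range
the truncations `|y| ⊓ v` and `|Q y| ⊓ v` coincide: `|y| ⊓ v` lies below `v`, hence in the
band, so it is fixed by `Q` and lies below `Q |y| = |Q y|`. So un-convergence in the band
`range (P b)` is un-convergence in `X` tested against the positive elements of that band.
Conversely, the test vectors `u` with `‖|f i - x| ⊓ |u|‖ → 0` form a closed additive
submonoid; containing every band, it contains their dense span, hence all of `X`.
-/

open Filter Topology

section PositiveContraction

variable {X F : Type*} [Lattice X] [AddCommGroup X] [IsOrderedAddMonoid X]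
  [FunLike F X X] [AddMonoidHomClass F X X]

theorem abs_sub_eq_add_of_inf_eq_zero {a b : X} (h : a ⊓ b = 0) : |a - b| = a + b := by
  have := two_nsmul_inf_eq_add_sub_abs_sub a b
  rw [h, smul_zero, eq_comm, sub_eq_zero, abs_sub_comm] at this
  exact this.symm

theorem inf_add_le_add_inf {a b c : X} (ha : 0 ≤ a) (hb : 0 ≤ b) (hc : 0 ≤ c) :
    a ⊓ (b + c) ≤ a ⊓ b + a ⊓ c := by
  rw [add_inf, inf_add, inf_add]
  exact le_inf (le_inf (inf_le_left.trans (le_add_of_nonneg_left ha))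
      (inf_le_left.trans (le_add_of_nonneg_left hb)))
    (le_inf (inf_le_left.trans (le_add_of_nonneg_right hc)) inf_le_right)

theorem monotone_of_nonneg_map_le_self {Q : F} (hQ : ∀ x, 0 ≤ x → 0 ≤ Q x ∧ Q x ≤ x) :
    Monotone Q :=
  (monotone_iff_map_nonneg Q).2 fun x hx => (hQ x hx).1

theorem monotone_sub_map_of_nonneg_map_le_self {Q : F}
    (hQ : ∀ x, 0 ≤ x → 0 ≤ Q x ∧ Q x ≤ x) : Monotone fun x => x - Q x := by
  intro y z hyz
  have h := (hQ (z - y) (sub_nonneg.2 hyz)).2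
  rw [map_sub, sub_le_sub_iff] at h
  rw [sub_le_sub_iff, add_comm y]
  exact h

theorem map_abs_of_nonneg_map_le_self {Q : F} (hQ : ∀ x, 0 ≤ x → 0 ≤ Q x ∧ Q x ≤ x)
    (y : X) : Q |y| = |Q y| := by
  have hdisj : Q y⁺ ⊓ Q y⁻ = 0 :=
    le_antisymm
      ((inf_le_inf (hQ _ (posPart_nonneg y)).2 (hQ _ (negPart_nonneg y)).2).trans_eq
        (posPart_inf_negPart_eq_zero y))
      (le_inf (hQ _ (posPart_nonneg y)).1 (hQ _ (negPart_nonneg y)).1)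
  rw [← posPart_add_negPart y, map_add, ← abs_sub_eq_add_of_inf_eq_zero hdisj, ← map_sub,
    posPart_sub_negPart]

theorem map_eq_self_of_le_of_map_eq_self {Q : F} (hQ : ∀ x, 0 ≤ x → 0 ≤ Q x ∧ Q x ≤ x)
    {t v : X} (ht : 0 ≤ t) (htv : t ≤ v) (hv : Q v = v) : Q t = t := by
  have h : t - Q t ≤ v - Q v := monotone_sub_map_of_nonneg_map_le_self hQ htv
  rw [hv, sub_self, sub_nonpos] at h
  exact le_antisymm (hQ t ht).2 h

theorem map_inf_eq_inf_of_map_eq_self {Q : F} (hQ : ∀ x, 0 ≤ x → 0 ≤ Q x ∧ Q x ≤ x)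
    {a v : X} (ha : 0 ≤ a) (hv : 0 ≤ v) (hQv : Q v = v) : Q a ⊓ v = a ⊓ v := by
  refine le_antisymm (inf_le_inf_right v (hQ a ha).2) (le_inf ?_ inf_le_right)
  calc a ⊓ v = Q (a ⊓ v) :=
        (map_eq_self_of_le_of_map_eq_self hQ (le_inf ha hv) inf_le_right hQv).symm
    _ ≤ Q a := monotone_of_nonneg_map_le_self hQ inf_le_left

theorem abs_map_inf_eq_abs_inf_of_map_eq_self {Q : F}
    (hQ : ∀ x, 0 ≤ x → 0 ≤ Q x ∧ Q x ≤ x) (y : X) {v : X} (hv : 0 ≤ v) (hQv : Q v = v) :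
    |Q y| ⊓ v = |y| ⊓ v := by
  rw [← map_abs_of_nonneg_map_le_self hQ,
    map_inf_eq_inf_of_map_eq_self hQ (abs_nonneg y) hv hQv]

end PositiveContraction

section UnNull

variable {X ι : Type*} [NormedAddCommGroup X] [Lattice X] [HasSolidNorm X]
  [IsOrderedAddMonoid X]

def unNullSet (g : ι → X) (l : Filter ι) : AddSubmonoid X where
  carrier := {u | Tendsto (fun i => ‖|g i| ⊓ |u|‖) l (𝓝 0)}
  zero_mem' := by simpa using tendsto_const_nhds
  add_mem' {u w} hu hw := by
    refine squeeze_zero (fun i => norm_nonneg _) (fun i => ?_) (by simpa using hu.add hw)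
    refine (norm_le_norm_of_abs_le_abs ?_).trans (norm_add_le _ _)
    have hle : |g i| ⊓ |u + w| ≤ |g i| ⊓ |u| + |g i| ⊓ |w| :=
      (inf_le_inf_left _ (abs_add_le u w)).trans
        (inf_add_le_add_inf (abs_nonneg _) (abs_nonneg _) (abs_nonneg _))
    have hnonneg : (0 : X) ≤ |g i| ⊓ |u + w| := le_inf (abs_nonneg _) (abs_nonneg _)
    rwa [abs_of_nonneg hnonneg, abs_of_nonneg (hnonneg.trans hle)]

theorem mem_unNullSet {g : ι → X} {l : Filter ι} {u : X} :
    u ∈ unNullSet g l ↔ Tendsto (fun i => ‖|g i| ⊓ |u|‖) l (𝓝 0) :=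
  Iff.rfl

theorem norm_inf_le_norm_inf_add_norm_sub (a u w : X) : ‖a ⊓ u‖ ≤ ‖a ⊓ w‖ + ‖u - w‖ := by
  have h := norm_inf_sub_inf_le_add_norm a u a w
  rw [sub_self, norm_zero, zero_add] at h
  exact (norm_le_norm_add_norm_sub' _ _).trans (by gcongr)

theorem isClosed_unNullSet (g : ι → X) (l : Filter ι) : IsClosed (unNullSet g l : Set X) := by
  refine isClosed_of_closure_subset fun u hu => ?_
  rw [SetLike.mem_coe, mem_unNullSet, NormedAddGroup.tendsto_nhds_zero]
  intro ε hε
  obtain ⟨w, hw, huw⟩ := Metric.mem_closure_iff.1 hu (ε / 2) (half_pos hε)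
  filter_upwards [(NormedAddGroup.tendsto_nhds_zero.1 hw) (ε / 2) (half_pos hε)] with i hi
  rw [norm_norm] at hi ⊢
  calc ‖|g i| ⊓ |u|‖ ≤ ‖|g i| ⊓ |w|‖ + ‖|u| - |w|‖ :=
        norm_inf_le_norm_inf_add_norm_sub _ _ _
    _ ≤ ‖|g i| ⊓ |w|‖ + ‖u - w‖ := by gcongr; exact norm_abs_sub_abs u w
    _ < ε / 2 + ε / 2 := add_lt_add hi (by rwa [← dist_eq_norm])
    _ = ε := add_halves ε

theorem unTendsto_iff_forall_mem_unNullSet {f : ι → X} {l : Filter ι} {x : X} :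
    UnTendsto f l x ↔ ∀ u, u ∈ unNullSet (fun i => f i - x) l := by
  refine ⟨fun h u => ?_, fun h u hu => ?_⟩
  · simpa only [mem_unNullSet, abs_abs] using h |u| (abs_nonneg u)
  · simpa only [mem_unNullSet, abs_of_nonneg hu] using h u

end UnNull

theorem unTendsto_iff_unTendsto_in_each_band_general
    {X : Type*} [NormedAddCommGroup X] [Lattice X] [HasSolidNorm X] [IsOrderedAddMonoid X]
    [NormedSpace ℝ X]
    {κ : Type*} (P : κ → X →ₗ[ℝ] X)
    (hidem : ∀ b, (P b) ∘ₗ (P b) = P b)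
    (hpos : ∀ b, ∀ x : X, 0 ≤ x → 0 ≤ P b x ∧ P b x ≤ x)
    (hdense : closure ((⨆ b, LinearMap.range (P b) : Submodule ℝ X) : Set X) = Set.univ)
    {ι : Type*} (l : Filter ι) (f : ι → X) (x : X) :
    UnTendsto f l x ↔
      ∀ b, ∀ u ∈ LinearMap.range (P b), 0 ≤ u →
        Tendsto (fun i => ‖|P b (f i) - P b x| ⊓ u‖) l (𝓝 0) := by
  have hfix : ∀ b, ∀ v ∈ LinearMap.range (P b), P b v = v := by
    rintro b _ ⟨z, rfl⟩
    exact LinearMap.congr_fun (hidem b) z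
  have hband : ∀ b, ∀ u ∈ LinearMap.range (P b), 0 ≤ u → ∀ i,
      |P b (f i) - P b x| ⊓ u = |f i - x| ⊓ u := fun b u hu hu0 i => by
    rw [← map_sub, abs_map_inf_eq_abs_inf_of_map_eq_self (hpos b) _ hu0 (hfix b u hu)]
  refine ⟨fun h b u hu hu0 => ?_, fun h => ?_⟩
  · simpa only [hband b u hu hu0] using h u hu0
  · refine unTendsto_iff_forall_mem_unNullSet.2 fun u => ?_
    have hspan : (⨆ b, LinearMap.range (P b)).toAddSubmonoid ≤ unNullSet (f · - x) l := by
      rw [Submodule.iSup_toAddSubmonoid]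
      refine iSup_le fun b => ?_
      rintro _ ⟨z, rfl⟩
      have habs : |P b z| ∈ LinearMap.range (P b) :=
        ⟨|z|, map_abs_of_nonneg_map_le_self (hpos b) z⟩
      simpa only [mem_unNullSet, hband b _ habs (abs_nonneg _)] using
        h b _ habs (abs_nonneg _)
    exact (isClosed_unNullSet _ l).closure_subset_iff.2 hspan (hdense ▸ Set.mem_univ u)

/-- Dense band decomposition criterion: if `(P b)` is a family of band
projections (idempotent, `0 ≤ P b ≤ I`) with pairwise disjoint ranges whose
span is norm dense, then a net un-converges to `x` in `X` iff each projected net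
`P b ∘ f` un-converges to `P b x` in the band `range (P b)`. -/
theorem unTendsto_iff_unTendsto_in_each_band
    {X : Type*} [NormedAddCommGroup X] [Lattice X] [HasSolidNorm X] [IsOrderedAddMonoid X]
    [NormedSpace ℝ X] [CompleteSpace X]
    {κ : Type*} (P : κ → X →ₗ[ℝ] X)
    (hidem : ∀ b, (P b) ∘ₗ (P b) = P b)
    (hpos : ∀ b, ∀ x : X, 0 ≤ x → 0 ≤ P b x ∧ P b x ≤ x)
    (hdisj : ∀ b c, b ≠ c → ∀ x y : X, |P b x| ⊓ |P c y| = 0)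
    (hdense : closure ((⨆ b, LinearMap.range (P b) : Submodule ℝ X) : Set X) = Set.univ)
    {ι : Type*} (l : Filter ι) (f : ι → X) (x : X) :
    UnTendsto f l x ↔
      ∀ b, ∀ u ∈ LinearMap.range (P b), 0 ≤ u →
        Tendsto (fun i => ‖|P b (f i) - P b x| ⊓ u‖) l (𝓝 0) :=
  unTendsto_iff_unTendsto_in_each_band_general P hidem hpos hdense l f x
end

section
/- The set of all un-continuous linear functionals on a Banach lattice X is an ideal in the dual X*; in particular, if φ is un-continuous then |φ| is un-continuous. -/
open Filter Topology

universe u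

/-- A continuous linear functional is un-continuous if it carries un-null nets to
null nets of reals. -/
def UnContinuous {X : Type u} [NormedAddCommGroup X] [Lattice X] [HasSolidNorm X] [IsOrderedAddMonoid X] [NormedSpace ℝ X]
    (φ : X →L[ℝ] ℝ) : Prop :=
  ∀ (ι : Type u) (l : Filter ι) (f : ι → X),
    UnTendsto f l 0 → Tendsto (fun i => φ (f i)) l (𝓝 0)

/-- The value of the modulus `|φ|` at `x ≥ 0`, given by the Riesz–Kantorovich
formula `|φ|(x) = sup {|φ y| : |y| ≤ x}`. -/
noncomputable def modulusAt {X : Type u} [NormedAddCommGroup X] [Lattice X] [HasSolidNorm X] [IsOrderedAddMonoid X]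
    [NormedSpace ℝ X] (φ : X →L[ℝ] ℝ) (x : X) : ℝ :=
  sSup {r : ℝ | ∃ y : X, |y| ≤ x ∧ r = |φ y|}

/-!
An un-null net `f` can be dominated: choose `y i` with `|y i| ≤ |f i|` and
`|φ|(|f i|) ≤ 2 |φ (y i)|`. The net `y` is again un-null, so `|φ|(|f i|) → 0`, and then
`|ψ (f i)| ≤ |ψ|(|f i|) ≤ |φ|(|f i|) → 0` whenever `|ψ| ≤ |φ|`. A functional agreeing with `|φ|`
on the positive cone is positive, hence is its own modulus there, and this solidity applies.
-/
section UnTendsto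

variable {ι X : Type*} [NormedAddCommGroup X] [Lattice X] [HasSolidNorm X] [IsOrderedAddMonoid X]

theorem UnTendsto.of_abs_le {f g : ι → X} {l : Filter ι} (hf : UnTendsto f l 0)
    (hgf : ∀ i, |g i| ≤ |f i|) : UnTendsto g l 0 := by
  intro u hu
  refine squeeze_zero (fun _ => norm_nonneg _) (fun i => norm_le_norm_of_abs_le_abs ?_) (hf u hu)
  have hg : 0 ≤ |g i - 0| ⊓ u := le_inf (abs_nonneg _) hu
  have hgf' : |g i - 0| ⊓ u ≤ |f i - 0| ⊓ u := by
    simpa only [sub_zero] using inf_le_inf_right u (hgf i)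
  rwa [abs_of_nonneg hg, abs_of_nonneg (hg.trans hgf')]

end UnTendsto

section AdditiveFunctional

variable {X F : Type*} [AddCommGroup X] [Lattice X] [IsOrderedAddMonoid X] [FunLike F X ℝ]
  [AddMonoidHomClass F X ℝ]

theorem zero_mem_modulusAt_set (φ : F) {x : X} (hx : 0 ≤ x) :
    (0 : ℝ) ∈ {r : ℝ | ∃ y : X, |y| ≤ x ∧ r = |φ y|} :=
  ⟨0, by simpa using hx, by simp⟩

theorem abs_apply_le_apply_abs {θ : F} (hθ : ∀ z, 0 ≤ z → 0 ≤ θ z) (y : X) :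
    |θ y| ≤ θ |y| := by
  have hsub : 0 ≤ θ (|y| - y) := hθ _ (sub_nonneg.mpr (le_abs_self y))
  have hadd : 0 ≤ θ (|y| - -y) := hθ _ (sub_nonneg.mpr (neg_le_abs y))
  rw [map_sub] at hsub
  rw [map_sub, map_neg] at hadd
  exact abs_le.mpr ⟨by linarith, by linarith⟩

end AdditiveFunctional

section Modulus

variable {X : Type u} [NormedAddCommGroup X] [Lattice X] [HasSolidNorm X] [IsOrderedAddMonoid X]
  [NormedSpace ℝ X]

theorem bddAbove_modulusAt_set (φ : X →L[ℝ] ℝ) (x : X) :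
    BddAbove {r : ℝ | ∃ y : X, |y| ≤ x ∧ r = |φ y|} := by
  refine ⟨‖φ‖ * ‖x‖, ?_⟩
  rintro r ⟨y, hy, rfl⟩
  have hyx : |y| ≤ |x| := by rwa [abs_of_nonneg ((abs_nonneg y).trans hy)]
  calc |φ y| ≤ ‖φ‖ * ‖y‖ := φ.le_opNorm y
    _ ≤ ‖φ‖ * ‖x‖ := by gcongr; exact norm_le_norm_of_abs_le_abs hyx

theorem abs_apply_le_modulusAt_abs (φ : X →L[ℝ] ℝ) (x : X) : |φ x| ≤ modulusAt φ |x| :=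
  le_csSup (bddAbove_modulusAt_set φ |x|) ⟨x, le_rfl, rfl⟩

theorem modulusAt_nonneg (φ : X →L[ℝ] ℝ) {x : X} (hx : 0 ≤ x) : 0 ≤ modulusAt φ x :=
  le_csSup (bddAbove_modulusAt_set φ x) (zero_mem_modulusAt_set φ hx)

theorem exists_abs_le_modulusAt_le_two_mul (φ : X →L[ℝ] ℝ) {x : X} (hx : 0 ≤ x) :
    ∃ y : X, |y| ≤ x ∧ modulusAt φ x ≤ 2 * |φ y| := by
  rcases (modulusAt_nonneg φ hx).eq_or_lt with hzero | hpos
  · exact ⟨0, by simpa using hx, by simp [← hzero]⟩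
  · obtain ⟨_, ⟨y, hy, rfl⟩, hlt⟩ := exists_lt_of_lt_csSup
      ⟨0, zero_mem_modulusAt_set φ hx⟩ (half_lt_self hpos)
    exact ⟨y, hy, by rw [modulusAt]; linarith⟩

theorem modulusAt_le_apply {θ : X →L[ℝ] ℝ} (hθ : ∀ z, 0 ≤ z → 0 ≤ θ z) {x : X} (hx : 0 ≤ x) :
    modulusAt θ x ≤ θ x := by
  refine csSup_le ⟨0, zero_mem_modulusAt_set θ hx⟩ ?_
  rintro _ ⟨y, hy, rfl⟩
  have hmono : 0 ≤ θ (x - |y|) := hθ _ (sub_nonneg.mpr hy)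
  rw [map_sub] at hmono
  linarith [abs_apply_le_apply_abs hθ y]

end Modulus

namespace UnContinuous

variable {X : Type u} [NormedAddCommGroup X] [Lattice X] [HasSolidNorm X] [IsOrderedAddMonoid X]
  [NormedSpace ℝ X] {φ ψ : X →L[ℝ] ℝ}

theorem add (hφ : UnContinuous φ) (hψ : UnContinuous ψ) : UnContinuous (φ + ψ) := fun ι l f hf => by
  simpa using (hφ ι l f hf).add (hψ ι l f hf)

theorem const_smul (hφ : UnContinuous φ) (c : ℝ) : UnContinuous (c • φ) := fun ι l f hf => by
  simpa using (hφ ι l f hf).const_mul c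

theorem tendsto_modulusAt_abs (hφ : UnContinuous φ) {ι : Type u} {l : Filter ι} {f : ι → X}
    (hf : UnTendsto f l 0) : Tendsto (fun i => modulusAt φ |f i|) l (𝓝 0) := by
  choose y hyf hφy using fun i => exists_abs_le_modulusAt_le_two_mul φ (abs_nonneg (f i))
  have hy : UnTendsto y l 0 := hf.of_abs_le hyf
  have hφy_lim : Tendsto (fun i => 2 * |φ (y i)|) l (𝓝 0) := by
    simpa using ((hφ ι l y hy).abs).const_mul 2
  exact squeeze_zero (fun i => modulusAt_nonneg φ (abs_nonneg _)) hφy hφy_lim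

theorem of_modulusAt_le (hφ : UnContinuous φ)
    (hψφ : ∀ x : X, 0 ≤ x → modulusAt ψ x ≤ modulusAt φ x) : UnContinuous ψ :=
  fun _ _ f hf => squeeze_zero_norm
    (fun i => (abs_apply_le_modulusAt_abs ψ (f i)).trans (hψφ _ (abs_nonneg _)))
    (hφ.tendsto_modulusAt_abs hf)

end UnContinuous

theorem unContinuous_functionals_form_ideal_general
    {X : Type u} [NormedAddCommGroup X] [Lattice X] [HasSolidNorm X] [IsOrderedAddMonoid X] [NormedSpace ℝ X] :
    (∀ φ ψ : X →L[ℝ] ℝ, UnContinuous φ → UnContinuous ψ → UnContinuous (φ + ψ)) ∧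
    (∀ (c : ℝ) (φ : X →L[ℝ] ℝ), UnContinuous φ → UnContinuous (c • φ)) ∧
    (∀ φ ψ : X →L[ℝ] ℝ, UnContinuous φ →
      (∀ x : X, 0 ≤ x → modulusAt ψ x ≤ modulusAt φ x) → UnContinuous ψ) ∧
    (∀ φ θ : X →L[ℝ] ℝ, UnContinuous φ →
      (∀ x : X, 0 ≤ x → θ x = modulusAt φ x) → UnContinuous θ) := by
  refine ⟨fun _ _ => UnContinuous.add, fun c _ hφ => hφ.const_smul c,
    fun _ _ => UnContinuous.of_modulusAt_le, fun φ θ hφ hθφ => ?_⟩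
  have hθ_pos : ∀ z, 0 ≤ z → 0 ≤ θ z := fun z hz => (hθφ z hz).symm ▸ modulusAt_nonneg φ hz
  exact hφ.of_modulusAt_le fun x hx => (modulusAt_le_apply hθ_pos hx).trans (hθφ x hx).le

/-- The un-continuous functionals form an ideal in the dual: they are closed
under addition and scalar multiplication, the set is solid (if `|ψ| ≤ |φ|`
pointwise on positives, via the Riesz–Kantorovich formula, and `φ` is
un-continuous then so is `ψ`); in particular, if `φ` is un-continuous then its
modulus `|φ|` is un-continuous. -/
theorem unContinuous_functionals_form_ideal
    {X : Type u} [NormedAddCommGroup X] [Lattice X] [HasSolidNorm X] [IsOrderedAddMonoid X] [NormedSpace ℝ X] [CompleteSpace X] :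
    (∀ φ ψ : X →L[ℝ] ℝ, UnContinuous φ → UnContinuous ψ → UnContinuous (φ + ψ)) ∧
    (∀ (c : ℝ) (φ : X →L[ℝ] ℝ), UnContinuous φ → UnContinuous (c • φ)) ∧
    (∀ φ ψ : X →L[ℝ] ℝ, UnContinuous φ →
      (∀ x : X, 0 ≤ x → modulusAt ψ x ≤ modulusAt φ x) → UnContinuous ψ) ∧
    (∀ φ θ : X →L[ℝ] ℝ, UnContinuous φ →
      (∀ x : X, 0 ≤ x → θ x = modulusAt φ x) → UnContinuous θ) :=
  unContinuous_functionals_form_ideal_general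
end
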